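/- Let g be a finite-dimensional real Lie algebra that admits an invariant positive definite symmetric bilinear form, and suppose the center of g is trivial. Then the scalar product ⟨u,v⟩ = -tr(ad u ∘ ad v) is itself positive definite on g, i.e., -tr(ad u ∘ ad u) > 0 for every nonzero u ∈ g. -/

import Mathlib

/-!
Use the invariant form `B` as an inner product. Invariance says that `ad u` is skew-adjoint, so
over an orthonormal basis `(eᵢ)` we get `tr (ad u ∘ ad u) = -∑ ‖ad u eᵢ‖²`, which is negative as
soon as `ad u ≠ 0`; and `ad u = 0` only for `u` in the center.
-/

open scoped InnerProductSpace

namespace LinearMap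

section InnerProductSpace

variable {E ι : Type*} [NormedAddCommGroup E] [InnerProductSpace ℝ E]

theorem trace_comp_self_eq_neg_sum_norm_sq [Fintype ι] {A : E →ₗ[ℝ] E}
    (hA : ∀ x y, ⟪A x, y⟫_ℝ = -⟪x, A y⟫_ℝ) (b : OrthonormalBasis ι ℝ E) :
    trace ℝ E (A ∘ₗ A) = -∑ i, ‖A (b i)‖ ^ 2 := by
  rw [trace_eq_sum_inner _ b, ← Finset.sum_neg_distrib]
  refine Finset.sum_congr rfl fun i _ => ?_
  rw [comp_apply, real_inner_comm, hA, real_inner_self_eq_norm_sq]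

theorem trace_comp_self_neg_of_skew [FiniteDimensional ℝ E] {A : E →ₗ[ℝ] E}
    (hA : ∀ x y, ⟪A x, y⟫_ℝ = -⟪x, A y⟫_ℝ) (hA₀ : A ≠ 0) :
    trace ℝ E (A ∘ₗ A) < 0 := by
  let b := stdOrthonormalBasis ℝ E
  obtain ⟨i, hi⟩ : ∃ i, A (b i) ≠ 0 := by
    by_contra! h
    exact hA₀ (b.toBasis.ext fun i => by simpa using h i)
  rw [trace_comp_self_eq_neg_sum_norm_sq hA b, neg_neg_iff_pos]
  exact Finset.sum_pos' (fun j _ => by positivity)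
    ⟨i, Finset.mem_univ i, pow_pos (norm_pos_iff.mpr hi) 2⟩

end InnerProductSpace

namespace BilinForm

variable {V : Type*} [AddCommGroup V] [Module ℝ V]

abbrev toInnerProductSpaceCore (B : LinearMap.BilinForm ℝ V) (hsymm : ∀ u v, B u v = B v u)
    (hpos : ∀ u, u ≠ 0 → 0 < B u u) : InnerProductSpace.Core ℝ V where
  inner x y := B x y
  conj_inner_symm x y := by simpa using hsymm y x
  re_inner_nonneg x := by
    rcases eq_or_ne x 0 with rfl | hx
    · simp
    · simpa using (hpos x hx).le
  definite x hx := by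
    by_contra h
    exact (hpos x h).ne' hx
  add_left x y z := by simp
  smul_left x y r := by simp

theorem trace_comp_self_neg_of_skew [FiniteDimensional ℝ V] (B : LinearMap.BilinForm ℝ V)
    (hsymm : ∀ u v, B u v = B v u) (hpos : ∀ u, u ≠ 0 → 0 < B u u) {A : V →ₗ[ℝ] V}
    (hA : ∀ x y, B (A x) y = -B x (A y)) (hA₀ : A ≠ 0) :
    trace ℝ V (A ∘ₗ A) < 0 := by
  let core := B.toInnerProductSpaceCore hsymm hpos
  let : NormedAddCommGroup V := core.toNormedAddCommGroup
  let : InnerProductSpace ℝ V := InnerProductSpace.ofCore core.toCore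
  exact LinearMap.trace_comp_self_neg_of_skew hA hA₀

end BilinForm

end LinearMap

theorem LieAlgebra.ad_ne_zero_of_center_eq_bot {R L : Type*} [CommRing R] [LieRing L]
    [LieAlgebra R L] (hcenter : LieAlgebra.center R L = ⊥) {u : L} (hu : u ≠ 0) :
    LieAlgebra.ad R L u ≠ 0 := by
  intro h
  apply hu
  have hmem : u ∈ LieAlgebra.center R L := by
    rw [← LieDerivation.ad_ker_eq_center, LieHom.mem_ker]
    ext x
    simpa using LinearMap.congr_fun h x
  simpa [hcenter] using hmem

/-- Let `g` be a finite-dimensional real Lie algebra admitting an invariant positive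
definite symmetric bilinear form, with trivial center. Then the scalar product
`⟨u,v⟩ = -tr(ad u ∘ ad v)` is itself positive definite on `g`. -/
theorem neg_killing_posDef_of_trivial_center
    {L : Type*} [LieRing L] [LieAlgebra ℝ L] [FiniteDimensional ℝ L]
    (B : LinearMap.BilinForm ℝ L)
    (hsymm : ∀ u v : L, B u v = B v u)
    (hinv : ∀ x u v : L, B ⁅x, u⁆ v + B u ⁅x, v⁆ = 0)
    (hpos : ∀ u : L, u ≠ 0 → 0 < B u u)
    (hcenter : LieAlgebra.center ℝ L = ⊥) :
    ∀ u : L, u ≠ 0 →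
      0 < -(LinearMap.trace ℝ L (LieAlgebra.ad ℝ L u ∘ₗ LieAlgebra.ad ℝ L u)) := by
  intro u hu
  have hskew : ∀ x y, B (LieAlgebra.ad ℝ L u x) y = -B x (LieAlgebra.ad ℝ L u y) :=
    fun x y => eq_neg_of_add_eq_zero_left (hinv u x y)
  exact neg_pos.mpr <| B.trace_comp_self_neg_of_skew hsymm hpos hskew
    (LieAlgebra.ad_ne_zero_of_center_eq_bot hcenter hu)
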